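/- In the L-period model with L ≥ 3 and γ_{i,j} = α·δ^{i−j−1} for α > 0, 0 ≤ δ ≤ 1: for each i ≥ 2, the total path weight from i to 1 satisfies Σ_{p ∈ P[i→1]} W(p) = −α(δ − α)^{i−2}. Consequently, if δ > α then Σ_{p ∈ P[i→j]} W(p) < 0 for all i > j, and the pseudo-true fundamentals satisfy μᵢ* < μᵢ• for all i and every cutoff vector (c₁,...,c_L) ∈ ℝ^L. -/

import Mathlib

/-!
The decreasing paths from `i + 1` to `j` split according to whether they visit `i`. Those that
do are the paths from `i` preceded by the edge `i + 1 → i` of weight `-α`; those that do not are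
the paths from `i` with their first edge `i → b` replaced by `i + 1 → b`, whose weight is `δ`
times larger. Hence `P[i+1 → j] = (δ - α) P[i → j]`, and `P[j+1 → j] = -α` gives the closed form.

For the fundamentals, the same geometric kernel turns the defining equations into the recursion
`g (n+1) = (δ - α) g n + α (μ•ₙ - E[Xₙ | Xₙ ≤ cₙ])`, `g 0 = 0`, for the gaps `g n = μ•ₙ - μ*ₙ`.
The truncated Gaussian mean lies strictly below the mean, since
`∫_{x ≤ c} (x - a) φ(x) dx = -σ² φ(c) < 0`, so all later gaps are positive when `δ ≥ α`.
-/

open MeasureTheory Set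

/-- Gaussian density with mean `a` and variance `s2`. -/
noncomputable def gauss (a s2 x : ℝ) : ℝ :=
  (Real.sqrt (2 * Real.pi * s2))⁻¹ * Real.exp (-(x - a) ^ 2 / (2 * s2))

/-- Mean of a `N(a, s2)` random variable truncated above at `c`, i.e. `E[X | X ≤ c]`. -/
noncomputable def truncMean (a s2 c : ℝ) : ℝ :=
  (∫ x in Iic c, x * gauss a s2 x) / (∫ x in Iic c, gauss a s2 x)

/-- The weight of a path given as the list of its nodes: the product of the edge
weights `−γ_{a,b}` over consecutive nodes `a, b`. -/
noncomputable def listWeight (γ : ℕ → ℕ → ℝ) : List ℕ → ℝ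
  | a :: b :: rest => (-(γ a b)) * listWeight γ (b :: rest)
  | _ => 1

/-- The total weight `Σ_{p ∈ P[i→j]} W(p)` over all strictly decreasing paths from
`i` to `j`. -/
noncomputable def pathWeightSum (γ : ℕ → ℕ → ℝ) (i j : ℕ) : ℝ :=
  ∑ S ∈ (Finset.Ioo j i).powerset,
    listWeight γ (i :: ((S.sort (· ≤ ·)).reverse ++ [j]))

open Filter ProbabilityTheory

section TruncatedGaussian

variable {a s2 : ℝ}

lemma gauss_eq_gaussianPDFReal (hs2 : 0 ≤ s2) (a : ℝ) :
    gauss a s2 = gaussianPDFReal a s2.toNNReal := by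
  ext x
  simp [gauss, gaussianPDFReal, Real.coe_toNNReal _ hs2]

lemma gauss_pos (hs2 : 0 < s2) (a x : ℝ) : 0 < gauss a s2 x := by
  rw [gauss_eq_gaussianPDFReal hs2.le]
  exact gaussianPDFReal_pos _ _ _ (by simpa using hs2)

lemma integrable_gauss (hs2 : 0 ≤ s2) (a : ℝ) : Integrable (gauss a s2) := by
  rw [gauss_eq_gaussianPDFReal hs2]
  exact integrable_gaussianPDFReal _ _

lemma integrable_sub_mul_gauss (hs2 : 0 < s2) (a : ℝ) :
    Integrable (fun x => (x - a) * gauss a s2 x) := by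
  have h := ((integrable_mul_exp_neg_mul_sq (b := (2 * s2)⁻¹) (by positivity)).comp_sub_right
    a).const_mul (Real.sqrt (2 * Real.pi * s2))⁻¹
  refine h.congr (Eventually.of_forall fun x => ?_)
  dsimp only [gauss]
  ring_nf

lemma hasDerivAt_gauss (hs2 : s2 ≠ 0) (a x : ℝ) :
    HasDerivAt (gauss a s2) (-(x - a) / s2 * gauss a s2 x) x := by
  have hsq : HasDerivAt (fun y => -(y - a) ^ 2 / (2 * s2)) (-(x - a) / s2) x :=
    ((((hasDerivAt_id x).sub_const a).pow 2).neg.div_const (2 * s2)).congr_deriv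
      (by simp only [id]; field_simp; ring)
  exact (hsq.exp.const_mul (Real.sqrt (2 * Real.pi * s2))⁻¹).congr_deriv
    (by simp only [gauss]; ring)

/-- `-s2 · gauss` is an antiderivative of `(x - a) · gauss` vanishing at `-∞`. -/
lemma setIntegral_Iic_sub_mul_gauss (hs2 : 0 < s2) (a c : ℝ) :
    ∫ x in Iic c, (x - a) * gauss a s2 x = -s2 * gauss a s2 c := by
  have hderiv : ∀ x ∈ Iic c, HasDerivAt (fun x => -s2 * gauss a s2 x)
      ((x - a) * gauss a s2 x) x := fun x _ =>
    ((hasDerivAt_gauss hs2.ne' a x).const_mul (-s2)).congr_deriv (by field_simp)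
  have hint := (integrable_sub_mul_gauss hs2 a).integrableOn (s := Iic c)
  have hlim := tendsto_zero_of_hasDerivAt_of_integrableOn_Iic hderiv hint
    (((integrable_gauss hs2.le a).const_mul (-s2)).integrableOn)
  rw [integral_Iic_of_hasDerivAt_of_tendsto' hderiv hint hlim, sub_zero]

lemma setIntegral_Iic_gauss_pos (hs2 : 0 < s2) (a c : ℝ) : 0 < ∫ x in Iic c, gauss a s2 x := by
  rw [setIntegral_pos_iff_support_of_nonneg_ae
    (Eventually.of_forall fun x => (gauss_pos hs2 a x).le) (integrable_gauss hs2.le a).integrableOn,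
    Function.support_eq_univ fun x => (gauss_pos hs2 a x).ne', univ_inter, Real.volume_Iic]
  exact ENNReal.zero_lt_top

lemma sub_truncMean_eq (hs2 : 0 < s2) (a c : ℝ) :
    a - truncMean a s2 c = s2 * gauss a s2 c / ∫ x in Iic c, gauss a s2 x := by
  have hZ := (setIntegral_Iic_gauss_pos hs2 a c).ne'
  have hnum : ∫ x in Iic c, x * gauss a s2 x
      = ∫ x in Iic c, ((x - a) * gauss a s2 x + a * gauss a s2 x) := by
    congr 1; ext x; ring
  rw [truncMean, hnum, integral_add (integrable_sub_mul_gauss hs2 a).integrableOn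
    ((integrable_gauss hs2.le a).const_mul a).integrableOn, integral_const_mul,
    setIntegral_Iic_sub_mul_gauss hs2 a c]
  field_simp
  ring

lemma truncMean_lt (hs2 : 0 < s2) (a c : ℝ) : truncMean a s2 c < a := by
  have hgap : 0 < s2 * gauss a s2 c / ∫ x in Iic c, gauss a s2 x :=
    div_pos (mul_pos hs2 (gauss_pos hs2 a c)) (setIntegral_Iic_gauss_pos hs2 a c)
  linarith [sub_truncMean_eq hs2 a c]

end TruncatedGaussian

lemma Finset.sort_insert_of_forall_lt {β : Type*} [LinearOrder β] (S : Finset β) {a : β}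
    (ha : ∀ x ∈ S, x < a) :
    (insert a S).sort (· ≤ ·) = S.sort (· ≤ ·) ++ [a] := by
  have haS : a ∉ S := fun h => lt_irrefl a (ha a h)
  refine List.Perm.eq_of_pairwise' (Finset.pairwise_sort _ _) ?_ ?_
  · rw [List.pairwise_append]
    refine ⟨Finset.pairwise_sort _ _, List.pairwise_singleton _ _, fun x hx y hy => ?_⟩
    rw [List.mem_singleton.mp hy]
    exact (ha x ((Finset.mem_sort _).mp hx)).le
  · exact (Finset.sort_perm_toList _ _).trans ((Finset.toList_insert haS).trans
      (((Finset.sort_perm_toList _ _).symm.cons a).trans (List.perm_append_singleton a _).symm))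

section PathWeights

variable (γ : ℕ → ℕ → ℝ)

lemma pathWeightSum_succ_self (j : ℕ) : pathWeightSum γ (j + 1) j = -γ (j + 1) j := by
  have hIoo : Finset.Ioo j (j + 1) = ∅ := by ext; simp
  simp [pathWeightSum, hIoo, listWeight]

lemma pathWeightSum_succ (r : ℝ) {i j : ℕ} (hji : j < i)
    (hγ : ∀ b < i, γ (i + 1) b = r * γ i b) :
    pathWeightSum γ (i + 1) j = (r - γ (i + 1) i) * pathWeightSum γ i j := by
  have hIoo : Finset.Ioo j (i + 1) = insert i (Finset.Ioo j i) := by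
    ext x; simp only [Finset.mem_Ioo, Finset.mem_insert]; omega
  have hvia : ∀ S ∈ (Finset.Ioo j i).powerset,
      listWeight γ ((i + 1) :: (((insert i S).sort (· ≤ ·)).reverse ++ [j]))
        = -γ (i + 1) i * listWeight γ (i :: ((S.sort (· ≤ ·)).reverse ++ [j])) := by
    intro S hS
    have hlt : ∀ x ∈ S, x < i := fun x hx => (Finset.mem_Ioo.mp (Finset.mem_powerset.mp hS hx)).2
    rw [Finset.sort_insert_of_forall_lt S hlt, List.reverse_append]
    rfl
  have havoid : ∀ S ∈ (Finset.Ioo j i).powerset,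
      listWeight γ ((i + 1) :: ((S.sort (· ≤ ·)).reverse ++ [j]))
        = r * listWeight γ (i :: ((S.sort (· ≤ ·)).reverse ++ [j])) := by
    intro S hS
    obtain ⟨b, rest, hbr⟩ := List.exists_cons_of_ne_nil
      (List.append_ne_nil_of_right_ne_nil (S.sort (· ≤ ·)).reverse (List.cons_ne_nil j []))
    have hb : b < i := by
      have hmem : b ∈ (S.sort (· ≤ ·)).reverse ++ [j] := hbr ▸ List.mem_cons_self
      simp only [List.mem_append, List.mem_reverse, Finset.mem_sort, List.mem_singleton] at hmem
      rcases hmem with hbS | rfl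
      · exact (Finset.mem_Ioo.mp (Finset.mem_powerset.mp hS hbS)).2
      · exact hji
    rw [hbr]
    simp only [listWeight, hγ b hb]
    ring
  rw [pathWeightSum, pathWeightSum, hIoo, Finset.sum_powerset_insert (by simp),
    Finset.sum_congr rfl havoid, Finset.sum_congr rfl hvia, ← Finset.mul_sum, ← Finset.mul_sum]
  ring

end PathWeights

def geomKernel (α δ : ℝ) (i j : ℕ) : ℝ := α * δ ^ (i - j - 1)

section GeomKernel

variable (α δ : ℝ)

lemma geomKernel_succ_self (i : ℕ) : geomKernel α δ (i + 1) i = α := by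
  simp [geomKernel]

lemma geomKernel_succ_left {i j : ℕ} (hji : j < i) :
    geomKernel α δ (i + 1) j = δ * geomKernel α δ i j := by
  rw [geomKernel, geomKernel, show i + 1 - j - 1 = i - j - 1 + 1 by omega, pow_succ]
  ring

lemma pathWeightSum_geomKernel {i j : ℕ} (hji : j < i) :
    pathWeightSum (geomKernel α δ) i j = -α * (δ - α) ^ (i - j - 1) := by
  induction i, hji using Nat.le_induction with
  | base => simp [pathWeightSum_succ_self, geomKernel_succ_self]
  | succ i hji ih =>
    rw [pathWeightSum_succ _ δ hji fun b hb => geomKernel_succ_left α δ hb, ih,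
      geomKernel_succ_self, show i + 1 - j - 1 = i - j - 1 + 1 by omega, pow_succ]
    ring

lemma sum_geomKernel_succ (d : ℕ → ℝ) (n : ℕ) :
    ∑ j ∈ Finset.range (n + 1), geomKernel α δ (n + 1) j * d j
      = δ * ∑ j ∈ Finset.range n, geomKernel α δ n j * d j + α * d n := by
  rw [Finset.sum_range_succ, geomKernel_succ_self, Finset.mul_sum]
  congr 1
  refine Finset.sum_congr rfl fun j hj => ?_
  rw [geomKernel_succ_left α δ (Finset.mem_range.mp hj)]
  ring

lemma lt_of_eq_sub_sum_geomKernel {α δ : ℝ} (hα : 0 < α) (hαδ : α ≤ δ) {L : ℕ}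
    {μb m μstar : ℕ → ℝ} (hm : ∀ j, m j < μb j)
    (hrec : ∀ i < L, μstar i = μb i - ∑ j ∈ Finset.range i, geomKernel α δ i j * (μstar j - m j))
    {i : ℕ} (hi : 1 ≤ i) (hiL : i < L) : μstar i < μb i := by
  have hgap_succ : ∀ n, n + 1 < L →
      μb (n + 1) - μstar (n + 1) = (δ - α) * (μb n - μstar n) + α * (μb n - m n) := by
    intro n hn
    have hsucc := hrec (n + 1) hn
    rw [sum_geomKernel_succ] at hsucc
    linear_combination -hsucc + δ * hrec n (by omega)
  have hgap_nonneg : ∀ n < L, 0 ≤ μb n - μstar n := by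
    intro n
    induction n with
    | zero => intro h0; simp [hrec 0 h0]
    | succ n ih =>
      intro hn
      rw [hgap_succ n hn]
      exact add_nonneg (mul_nonneg (sub_nonneg.mpr hαδ) (ih (by omega)))
        (mul_nonneg hα.le (sub_nonneg.mpr (hm n).le))
  obtain ⟨n, rfl⟩ := Nat.exists_eq_add_of_le' hi
  have hpos : 0 < (δ - α) * (μb n - μstar n) + α * (μb n - m n) :=
    add_pos_of_nonneg_of_pos (mul_nonneg (sub_nonneg.mpr hαδ) (hgap_nonneg n (by omega)))
      (mul_pos hα (sub_pos.mpr (hm n)))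
  linarith [hgap_succ n hiL]

end GeomKernel

/-- Periods are indexed `0, 1, …, L−1`, so the paper's period `i` is index `i−1` here. -/
theorem path_counting_alpha_delta_general (L : ℕ) (α δ s2 : ℝ)
    (hα : 0 < α) (hs2 : 0 < s2) (μb : ℕ → ℝ) :
    let γ : ℕ → ℕ → ℝ := fun i j => α * δ ^ (i - j - 1)
    (∀ i : ℕ, 1 ≤ i → pathWeightSum γ i 0 = -α * (δ - α) ^ (i - 1)) ∧
    (α < δ →
      (∀ i j : ℕ, j < i → pathWeightSum γ i j < 0) ∧
      ∀ (c : ℕ → ℝ) (μstar : ℕ → ℝ),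
        (∀ i < L, μstar i =
          μb i - ∑ j ∈ Finset.range i, γ i j * (μstar j - truncMean (μb j) s2 (c j))) →
        ∀ i, 1 ≤ i → i < L → μstar i < μb i) := by
  intro γ
  rw [show γ = geomKernel α δ from rfl]
  refine ⟨fun i hi => by simpa using pathWeightSum_geomKernel α δ hi, fun hαδ => ⟨?_, ?_⟩⟩
  · intro i j hji
    rw [pathWeightSum_geomKernel α δ hji]
    exact mul_neg_of_neg_of_pos (neg_neg_of_pos hα) (pow_pos (sub_pos.mpr hαδ) _)
  · intro c μstar hrec i hi hiL
    exact lt_of_eq_sub_sum_geomKernel hα hαδ.le (fun j => truncMean_lt hs2 _ _) hrec hi hiL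

/-- Periods are indexed `0, 1, …, L−1` (so the paper's period `i` is index `i−1`).
With `γ_{i,j} = α·δ^{i−j−1}`: the total path weight from period `i` to the first period
is `−α(δ−α)^{i−1}` (for `i ≥ 1`, i.e. the paper's `−α(δ−α)^{i−2}` for `i ≥ 2`); hence if
`δ > α`, all total path weights are strictly negative and the pseudo-true fundamentals
satisfy `μᵢ* < μᵢ•` for every period after the first and every cutoff vector. -/
theorem path_counting_alpha_delta (L : ℕ) (hL : 3 ≤ L) (α δ s2 : ℝ)
    (hα : 0 < α) (hδ0 : 0 ≤ δ) (hδ1 : δ ≤ 1) (hs2 : 0 < s2) (μb : ℕ → ℝ) :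
    let γ : ℕ → ℕ → ℝ := fun i j => α * δ ^ (i - j - 1)
    (∀ i : ℕ, 1 ≤ i → pathWeightSum γ i 0 = -α * (δ - α) ^ (i - 1)) ∧
    (α < δ →
      (∀ i j : ℕ, j < i → pathWeightSum γ i j < 0) ∧
      ∀ (c : ℕ → ℝ) (μstar : ℕ → ℝ),
        (∀ i < L, μstar i =
          μb i - ∑ j ∈ Finset.range i, γ i j * (μstar j - truncMean (μb j) s2 (c j))) →
        ∀ i, 1 ≤ i → i < L → μstar i < μb i) :=
  path_counting_alpha_delta_general L α δ s2 hα hs2 μb
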